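/- arXiv:1511.02062 — 3 statements merged into one kernel-verified Lean document; each statement's English description precedes it below -/
import Mathlib

section
/- Let X be a CW complex with face poset X^(*), M a matching on X, and η a poset map from X^(*) to a poset P compatible with M (i.e., η(σ)=η(τ) whenever (τ→σ)∈M). If for every p∈P the restriction of M to the fiber η^{-1}(p) is acyclic, then M itself is acyclic. -/
/-- Abstract discrete Morse theory: if a matching `M` on a CW complex (represented combinatorially by its face poset: cells `V` with dimension function `dim` and covering edges `E` of the Hasse diagram) is compatible with a
poset grading `η` and its restriction to each fiber is acyclic, then it is acyclic. -/
theorem acyclic_matching_of_fiberwise_acyclic_CW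
    {V P : Type*} [PartialOrder P]
    (dim : V → ℕ) (E : V → V → Prop) (M : V → V → Prop)
    (hME : ∀ τ σ, M τ σ → E τ σ)
    (hdim : ∀ τ σ, E τ σ → dim σ + 1 = dim τ)
    (hmatch : ∀ τ σ τ' σ', M τ σ → M τ' σ' →
      (τ = τ' ∨ τ = σ' ∨ σ = τ' ∨ σ = σ') → τ = τ' ∧ σ = σ')
    (η : V → P)
    (hmono : ∀ τ σ, E τ σ → η σ ≤ η τ)
    (hconst : ∀ τ σ, M τ σ → η σ = η τ)
    (hfiber : ∀ p : P, ∀ v : V, ¬ Relation.TransGen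
      (fun x y => η x = p ∧ η y = p ∧ ((E x y ∧ ¬ M x y) ∨ M y x)) v v) :
    ∀ v : V, ¬ Relation.TransGen (fun x y => (E x y ∧ ¬ M x y) ∨ M y x) v v := by
  intro v hcyc
  set R : V → V → Prop := fun x y => (E x y ∧ ¬ M x y) ∨ M y x with hR
  -- η is non-increasing along edges
  have hstep : ∀ x y, R x y → η y ≤ η x := by
    intro x y h
    rcases h with ⟨he, _⟩ | hm
    · exact hmono _ _ he
    · exact (hconst _ _ hm).ge
  have hle : ∀ {a b}, Relation.TransGen R a b → η b ≤ η a := by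
    intro a b h
    induction h with
    | single h => exact hstep _ _ h
    | tail _ h ih => exact (hstep _ _ h).trans ih
  -- a cycle through v lies entirely in the fiber of η v
  have key : ∀ {a b}, Relation.TransGen R a b → η a = η v → η b = η v →
      Relation.TransGen (fun x y => η x = η v ∧ η y = η v ∧ R x y) a b := by
    intro a b h
    induction h with
    | single h => intro ha hb; exact Relation.TransGen.single ⟨ha, hb, h⟩
    | @tail c d hac hcd ih =>
        intro ha hd
        have hc : η c = η v := le_antisymm ((hle hac).trans ha.le)
          (hd ▸ hstep _ _ hcd)
        exact (ih ha hc).tail ⟨hc, hd, hcd⟩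
  exact hfiber (η v) v (key hcyc rfl rfl)
end

section
/- In the abstract setting: let V be a set with a function dim: V → ℕ, let E be a set of directed edges on V each decreasing dim by exactly 1, let M ⊆ E be a matching (each vertex in at most one edge of M), and let η: V → P be a map to a poset P which is monotone with respect to E (if (τ→σ)∈E then η(σ) ≤ η(τ)) and constant on edges of M. If for each p∈P the graph obtained by reversing the M-edges restricted to η^{-1}(p) is acyclic, then the graph on all of V obtained by reversing all M-edges is acyclic. -/
/-- Abstract discrete Morse theory: if a matching `M` on a graded graph is compatible with a
poset grading `η` and its restriction to each fiber is acyclic, then it is acyclic. -/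
theorem fiberwise_acyclic_matching_is_acyclic
    {V P : Type*} [PartialOrder P]
    (dim : V → ℕ) (E : V → V → Prop) (M : V → V → Prop)
    (hME : ∀ τ σ, M τ σ → E τ σ)
    (hdim : ∀ τ σ, E τ σ → dim σ + 1 = dim τ)
    (hmatch : ∀ τ σ τ' σ', M τ σ → M τ' σ' →
      (τ = τ' ∨ τ = σ' ∨ σ = τ' ∨ σ = σ') → τ = τ' ∧ σ = σ')
    (η : V → P)
    (hmono : ∀ τ σ, E τ σ → η σ ≤ η τ)
    (hconst : ∀ τ σ, M τ σ → η σ = η τ)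
    (hfiber : ∀ p : P, ∀ v : V, ¬ Relation.TransGen
      (fun x y => η x = p ∧ η y = p ∧ ((E x y ∧ ¬ M x y) ∨ M y x)) v v) :
    ∀ v : V, ¬ Relation.TransGen (fun x y => (E x y ∧ ¬ M x y) ∨ M y x) v v := by
  set R : V → V → Prop := fun x y => (E x y ∧ ¬ M x y) ∨ M y x with hR
  -- a single step does not increase η
  have hstep : ∀ x y, R x y → η y ≤ η x := by
    intro x y h
    rcases h with ⟨hE, _⟩ | hM
    · exact hmono _ _ hE
    · exact (hconst _ _ hM).ge
  -- along a path η is non-increasing, and if endpoints have equal η then the whole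
  -- path stays in the fiber
  have key : ∀ a b, Relation.TransGen R a b →
      η b ≤ η a ∧ (η a = η b → Relation.TransGen
        (fun x y => η x = η a ∧ η y = η a ∧ ((E x y ∧ ¬ M x y) ∨ M y x)) a b) := by
    intro a b h
    induction h with
    | single h =>
      exact ⟨hstep _ _ h, fun he => Relation.TransGen.single ⟨rfl, he.symm, h⟩⟩
    | tail hab hbc ih =>
      rename_i b c
      refine ⟨(hstep _ _ hbc).trans ih.1, fun hac => ?_⟩
      have hba : η b = η a := le_antisymm ih.1 (hac ▸ hstep _ _ hbc)
      exact (ih.2 hba.symm).tail ⟨hba, hac.symm, hbc⟩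
  intro v hv
  exact hfiber (η v) v ((key v v hv).2 rfl)
end

section
/- The relation on W × S^f defined by (u,T) ≤ (v,R) iff T ⊆ R, v⁻¹u ∈ W_R, and v⁻¹u is T-minimal (i.e., of minimal length in its coset v⁻¹u·W_T) is a partial order. -/
/-!
Reflexivity and antisymmetry are immediate, since an `R`-minimal element lying in `W_R` is `1`.
Transitivity rests on additivity: if `d` is `R`-minimal and `r ∈ W_R`, then
`ℓ (d * r) = ℓ d + ℓ r`. Building `r` up one simple reflection at a time, a first failure of
additivity would, by the exchange condition, either shorten `d` by a reflection lying in `W_R`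
or shorten `r`. The exchange condition comes from the parity representation of `W` on
`W × ZMod 2`, in which `s_i` sends `(t, z)` to `(s_i t s_i, z + [t = s_i])`: the parity of the
number of occurrences of `t` in the right inversion sequence of a word depends only on the
product of the word, and a right descent `s_i` of `w` occurs exactly once in the inversion
sequence of a reduced word for `w` ending in `i`.
-/

open Pointwise

namespace CoxeterSystem

variable {B W : Type*} [Group W] {M : CoxeterMatrix B} (cs : CoxeterSystem M W)

local prefix:100 "s" => cs.simple
local prefix:100 "π" => cs.wordProd
local prefix:100 "ℓ" => cs.length
local prefix:100 "ris " => cs.rightInvSeq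

theorem alternatingWord_two_mul_add_two (i i' : B) (p : ℕ) :
    alternatingWord i i' (2 * p + 2) = i :: i' :: alternatingWord i i' (2 * p) := by
  rw [alternatingWord_succ', alternatingWord_succ']
  simp

theorem reverse_alternatingWord_two_mul (i i' : B) (p : ℕ) :
    (alternatingWord i i' (2 * p)).reverse = alternatingWord i' i (2 * p) := by
  induction p generalizing i i' with
  | zero => rfl
  | succ p ih =>
    have hconcat : alternatingWord i i' (2 * p + 2) = alternatingWord i i' (2 * p) ++ [i, i'] :=
      by simp [alternatingWord_succ]
    rw [mul_add_one, hconcat, List.reverse_append, ih, alternatingWord_two_mul_add_two]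
    rfl

theorem prod_map_alternatingWord_two_mul {G : Type*} [Monoid G] (f : B → G) (i i' : B) (p : ℕ) :
    ((alternatingWord i i' (2 * p)).map f).prod = (f i * f i') ^ p := by
  induction p with
  | zero => simp [alternatingWord]
  | succ p ih =>
    rw [mul_add_one, alternatingWord_two_mul_add_two, List.map_cons, List.map_cons,
      List.prod_cons, List.prod_cons, ih, pow_succ', mul_assoc]

theorem wordProd_alternatingWord_add_two_mul (i i' : B) (m : ℕ) :
    π (alternatingWord i i' (m + 2 * M i i')) = π (alternatingWord i i' m) := by
  have hdiv : (m + 2 * M i i') / 2 = m / 2 + M i i' := by omega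
  simp only [prod_alternatingWord_eq_mul_pow, hdiv, pow_add, simple_mul_simple_pow, mul_one,
    Nat.even_add, even_two_mul, iff_true]

theorem wordProd_alternatingWord_two_mul (i i' : B) :
    π (alternatingWord i i' (2 * M i i')) = 1 := by
  simpa [alternatingWord] using cs.wordProd_alternatingWord_add_two_mul i i' 0

theorem even_count_rightInvSeq_alternatingWord [DecidableEq W] (i i' : B) (t : W) :
    Even ((ris (alternatingWord i i' (2 * M i i'))).count t) := by
  have hperiodic : (cs.leftInvSeq (alternatingWord i' i (2 * M i i'))).take (M i i') =
      (cs.leftInvSeq (alternatingWord i' i (2 * M i i'))).drop (M i i') := by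
    apply List.ext_getElem (by simp; omega)
    intro k hk _
    simp only [List.length_take, length_leftInvSeq, length_alternatingWord] at hk
    rw [List.getElem_take, List.getElem_drop,
      getElem_leftInvSeq_alternatingWord _ _ _ _ _ (by omega),
      getElem_leftInvSeq_alternatingWord _ _ _ _ _ (by omega),
      show 2 * (M i i' + k) + 1 = 2 * k + 1 + 2 * M i i' by ring,
      wordProd_alternatingWord_add_two_mul]
  rw [← reverse_alternatingWord_two_mul i' i, rightInvSeq_reverse, List.count_reverse,
    ← List.take_append_drop (M i i') (cs.leftInvSeq _), List.count_append, hperiodic]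
  exact ⟨_, rfl⟩

section ParityRepresentation

variable [DecidableEq W]

def parityFun (i : B) (p : W × ZMod 2) : W × ZMod 2 :=
  (s i * p.1 * s i, p.2 + if p.1 = s i then 1 else 0)

theorem parityFun_involutive (i : B) : Function.Involutive (cs.parityFun i) := by
  rintro ⟨t, z⟩
  have hconj : s i * t * s i = s i ↔ t = s i := by
    rw [mul_eq_right, mul_eq_one_iff_eq_inv', inv_simple]
  simp only [parityFun, hconj, Prod.mk.injEq]
  refine ⟨by simp [mul_assoc], ?_⟩
  split_ifs <;> simp [add_assoc, CharTwo.add_self_eq_zero]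

def parityPerm (i : B) : Equiv.Perm (W × ZMod 2) := (cs.parityFun_involutive i).toPerm

theorem prod_map_parityPerm_apply (ω : List B) (t : W) (z : ZMod 2) :
    (ω.map cs.parityPerm).prod (t, z) =
      (π ω * t * (π ω)⁻¹, z + ((ris ω).count t : ZMod 2)) := by
  induction ω generalizing z with
  | nil => simp
  | cons i ω ih =>
    have hreflection : π ω * t * (π ω)⁻¹ = s i ↔ (π ω)⁻¹ * s i * π ω = t := by
      constructor <;> rintro h <;> rw [← h] <;> group
    simp only [List.map_cons, List.prod_cons, Equiv.Perm.mul_apply, ih, parityPerm,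
      Function.Involutive.coe_toPerm, parityFun, rightInvSeq, List.count_cons, hreflection,
      beq_iff_eq, wordProd_cons, mul_inv_rev, inv_simple, Prod.mk.injEq]
    refine ⟨by group, ?_⟩
    split_ifs <;> push_cast <;> ring

theorem isLiftable_parityPerm : M.IsLiftable cs.parityPerm := by
  intro i i'
  ext ⟨t, z⟩ : 1
  obtain ⟨k, hk⟩ := cs.even_count_rightInvSeq_alternatingWord i i' t
  rw [← prod_map_alternatingWord_two_mul, prod_map_parityPerm_apply,
    wordProd_alternatingWord_two_mul, hk]
  simp [CharTwo.add_self_eq_zero]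

def parityRep : W →* Equiv.Perm (W × ZMod 2) :=
  cs.lift ⟨cs.parityPerm, cs.isLiftable_parityPerm⟩

theorem parityRep_wordProd (ω : List B) : cs.parityRep (π ω) = (ω.map cs.parityPerm).prod := by
  rw [wordProd, map_list_prod, List.map_map]
  congr 2
  ext1 i
  exact cs.lift_apply_simple cs.isLiftable_parityPerm i

theorem count_rightInvSeq_eq_of_wordProd_eq {ω ω' : List B} (h : π ω = π ω') (t : W) :
    ((ris ω).count t : ZMod 2) = (ris ω').count t := by
  have hrep := congrArg (fun g => (cs.parityRep g (t, 0)).2) h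
  simpa [parityRep_wordProd, prod_map_parityPerm_apply] using hrep

end ParityRepresentation

theorem simple_mem_rightInvSeq {ω : List B} {i : B} (h : cs.IsRightDescent (π ω) i) :
    s i ∈ ris ω := by
  classical
  obtain ⟨α, hα, hαω⟩ := cs.exists_isReduced (π ω * s i)
  have hω : π ω = π (α.concat i) := by
    rw [wordProd_concat, ← hαω, simple_mul_simple_cancel_right]
  have hαi : cs.IsReduced (α.concat i) := by
    rcases cs.length_mul_simple (π ω) i with hlen | hlen
    · exact absurd h (by unfold IsRightDescent; omega)
    · rw [IsReduced, ← hω, List.length_concat, ← hα.eq, ← hαω, ← hlen]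
  have hcount : (ris (α.concat i)).count (s i) = 1 :=
    List.count_eq_one_of_mem hαi.nodup_rightInvSeq (by rw [rightInvSeq_concat]; simp)
  have hparity := cs.count_rightInvSeq_eq_of_wordProd_eq hω (s i)
  rw [hcount] at hparity
  by_contra hnot
  simp [List.count_eq_zero_of_not_mem hnot] at hparity

theorem exists_eraseIdx_of_isRightDescent {ω : List B} {i : B} (h : cs.IsRightDescent (π ω) i) :
    ∃ j < ω.length, π ω * s i = π (ω.eraseIdx j) := by
  obtain ⟨j, hj, hji⟩ := List.mem_iff_getElem.mp (cs.simple_mem_rightInvSeq h)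
  refine ⟨j, by simpa using hj, ?_⟩
  rw [← wordProd_mul_getD_rightInvSeq, List.getD_eq_getElem _ _ hj, hji]

theorem length_mul_conj_lt_or_isRightDescent {a b : W} {i : B}
    (h : cs.IsRightDescent (a * b) i) :
    ℓ (a * (b * s i * b⁻¹)) < ℓ a ∨ cs.IsRightDescent b i := by
  obtain ⟨δ, hδ, rfl⟩ := cs.exists_isReduced a
  obtain ⟨ρ, hρ, rfl⟩ := cs.exists_isReduced b
  rw [← wordProd_append] at h
  obtain ⟨j, hj, hexch⟩ := cs.exists_eraseIdx_of_isRightDescent h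
  rw [List.length_append] at hj
  rcases lt_or_ge j δ.length with hjδ | hjδ
  · left
    rw [List.eraseIdx_append_of_lt_length hjδ, wordProd_append, wordProd_append] at hexch
    have hconj : π δ * (π ρ * s i * (π ρ)⁻¹) = π (δ.eraseIdx j) := by
      rw [← mul_inv_eq_of_eq_mul hexch]; group
    rw [hconj, hδ.eq]
    have := List.length_eraseIdx_add_one hjδ
    have := cs.length_wordProd_le (δ.eraseIdx j)
    omega
  · right
    rw [List.eraseIdx_append_of_length_le hjδ, wordProd_append, wordProd_append, mul_assoc,
      mul_right_inj] at hexch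
    rw [IsRightDescent, hexch, hρ.eq]
    have := List.length_eraseIdx_add_one (show j - δ.length < ρ.length by omega)
    have := cs.length_wordProd_le (ρ.eraseIdx (j - δ.length))
    omega

def IsMinimalInCoset (R : Set B) (w : W) : Prop :=
  ∀ v ∈ w • ((Subgroup.closure (cs.simple '' R) : Subgroup W) : Set W), ℓ w ≤ ℓ v

theorem isMinimalInCoset_one (R : Set B) : cs.IsMinimalInCoset R 1 := by
  simp [IsMinimalInCoset]

namespace IsMinimalInCoset

variable {cs} {R T : Set B} {d : W}

theorem le_length_mul (hd : cs.IsMinimalInCoset R d) {u : W}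
    (hu : u ∈ Subgroup.closure (cs.simple '' R)) : ℓ d ≤ ℓ (d * u) :=
  hd _ (Set.smul_mem_smul_set hu)

theorem eq_one_of_mem (hd : cs.IsMinimalInCoset R d)
    (hR : d ∈ Subgroup.closure (cs.simple '' R)) : d = 1 := by
  have := hd.le_length_mul (inv_mem hR)
  rwa [mul_inv_cancel, length_one, Nat.le_zero, length_eq_zero_iff] at this

theorem length_mul_simple_of_length_mul (hd : cs.IsMinimalInCoset R d) {r : W}
    (hr : r ∈ Subgroup.closure (cs.simple '' R)) {i : B} (hi : i ∈ R)
    (hdr : ℓ (d * r) = ℓ d + ℓ r) : ℓ (d * (r * s i)) = ℓ d + ℓ (r * s i) := by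
  rw [← mul_assoc]
  rcases cs.length_mul_simple r i with hup | hdown
  · rcases cs.length_mul_simple (d * r) i with hup' | hdown'
    · omega
    · have hconj : r * s i * r⁻¹ ∈ Subgroup.closure (cs.simple '' R) :=
        mul_mem (mul_mem hr (Subgroup.subset_closure ⟨i, hi, rfl⟩)) (inv_mem hr)
      rcases cs.length_mul_conj_lt_or_isRightDescent (a := d) (b := r) (i := i)
          (by unfold IsRightDescent; omega) with hlt | hdesc
      · exact absurd (hd.le_length_mul hconj) (not_le.mpr hlt)
      · exact absurd hdesc (by unfold IsRightDescent; omega)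
  · have := cs.length_mul_le d (r * s i)
    rw [← mul_assoc] at this
    rcases cs.length_mul_simple (d * r) i with h | h <;> omega

theorem length_mul (hd : cs.IsMinimalInCoset R d) {r : W}
    (hr : r ∈ Subgroup.closure (cs.simple '' R)) : ℓ (d * r) = ℓ d + ℓ r := by
  induction hr using Subgroup.closure_induction_right with
  | one => simp
  | mul_right r hr _ hi ih =>
    obtain ⟨i, hi, rfl⟩ := hi
    exact hd.length_mul_simple_of_length_mul hr hi ih
  | mul_inv_cancel r hr _ hi ih =>
    obtain ⟨i, hi, rfl⟩ := hi
    rw [inv_simple]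
    exact hd.length_mul_simple_of_length_mul hr hi ih

theorem mul {a b : W} (ha : cs.IsMinimalInCoset R a) (hb : cs.IsMinimalInCoset T b)
    (hbR : b ∈ Subgroup.closure (cs.simple '' R)) (hTR : T ⊆ R) :
    cs.IsMinimalInCoset T (a * b) := by
  rintro _ ⟨t, ht, rfl⟩
  have htR : t ∈ Subgroup.closure (cs.simple '' R) :=
    Subgroup.closure_mono (Set.image_mono hTR) ht
  calc ℓ (a * b) = ℓ a + ℓ b := ha.length_mul hbR
    _ ≤ ℓ a + ℓ (b * t) := by gcongr; exact hb.le_length_mul ht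
    _ = ℓ (a * b * t) := by rw [mul_assoc, ha.length_mul (mul_mem hbR htR)]

end IsMinimalInCoset

end CoxeterSystem

theorem salvetti_poset_isPartialOrder_general
    {B W : Type*} [Group W] (M : CoxeterMatrix B) (cs : CoxeterSystem M W) :
    IsPartialOrder
      (W × {T : Set B // ((Subgroup.closure (cs.simple '' T) : Subgroup W) : Set W).Finite})
      (fun p q => (p.2 : Set B) ⊆ (q.2 : Set B) ∧
        q.1⁻¹ * p.1 ∈ Subgroup.closure (cs.simple '' (q.2 : Set B)) ∧
        ∀ v ∈ (q.1⁻¹ * p.1) •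
            ((Subgroup.closure (cs.simple '' (p.2 : Set B)) : Subgroup W) : Set W),
          cs.length (q.1⁻¹ * p.1) ≤ cs.length v) := by
  refine { refl := fun p => ?_, trans := ?_, antisymm := ?_ }
  · rw [inv_mul_cancel]
    exact ⟨subset_rfl, one_mem _, cs.isMinimalInCoset_one _⟩
  · rintro ⟨u, T⟩ ⟨v, R⟩ ⟨w, P⟩ ⟨hTR, huv, huv_min⟩ ⟨hRP, hvw, hvw_min⟩
    have hcomp : w⁻¹ * u = (w⁻¹ * v) * (v⁻¹ * u) := by group
    rw [hcomp]
    exact ⟨hTR.trans hRP, mul_mem hvw (Subgroup.closure_mono (Set.image_mono hRP) huv),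
      CoxeterSystem.IsMinimalInCoset.mul hvw_min huv_min huv hTR⟩
  · rintro ⟨u, T⟩ ⟨v, R⟩ ⟨hTR, -, huv_min⟩ ⟨hRT, hvu, -⟩
    obtain rfl : T = R := Subtype.ext (hTR.antisymm hRT)
    have huv_mem : v⁻¹ * u ∈ Subgroup.closure (cs.simple '' (T : Set B)) := by
      simpa using inv_mem hvu
    obtain rfl : v = u :=
      inv_mul_eq_one.mp (CoxeterSystem.IsMinimalInCoset.eq_one_of_mem huv_min huv_mem)
    rfl

/-- The relation on `W × S^f` given by `(u,T) ≤ (v,R)` iff `T ⊆ R`, `v⁻¹u ∈ W_R`, and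
`v⁻¹u` is of minimal length in its coset `v⁻¹u • W_T` (i.e. `v⁻¹u` is `T`-minimal),
is a partial order.  Here `S^f` is the set of subsets `T` of the generating set with
`W_T` finite.  This is the poset underlying the Salvetti complex. -/
theorem salvetti_poset_isPartialOrder
    {B W : Type*} [Finite B] [Group W] (M : CoxeterMatrix B) (cs : CoxeterSystem M W) :
    IsPartialOrder
      (W × {T : Set B // ((Subgroup.closure (cs.simple '' T) : Subgroup W) : Set W).Finite})
      (fun p q => (p.2 : Set B) ⊆ (q.2 : Set B) ∧
        q.1⁻¹ * p.1 ∈ Subgroup.closure (cs.simple '' (q.2 : Set B)) ∧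
        ∀ v ∈ (q.1⁻¹ * p.1) •
            ((Subgroup.closure (cs.simple '' (p.2 : Set B)) : Subgroup W) : Set W),
          cs.length (q.1⁻¹ * p.1) ≤ cs.length v) :=
  salvetti_poset_isPartialOrder_general M cs
end
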